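/- Let M be an invertible n×n matrix over F_2 such that G_v(M) is connected (v(M)=1). Then s(M) ≥ n−1, i.e., M cannot be written as a product of fewer than n−1 CNOT gate matrices. -/

import Mathlib

open Matrix

variable {n : ℕ}

/-- Vertex-connectivity graph `G_v(M)`: edge between distinct `i, j` iff `M i j = 1` or `M j i = 1`. -/
def Gv (M : Matrix (Fin n) (Fin n) (ZMod 2)) : SimpleGraph (Fin n) :=
  SimpleGraph.fromRel (fun i j => M i j = 1)

/-- `v(M)`: number of connected components of `G_v(M)`. -/
noncomputable def vcomp (M : Matrix (Fin n) (Fin n) (ZMod 2)) : ℕ :=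
  Nat.card (Gv M).ConnectedComponent

/-- Edge-connectivity graph `G_e(M)`: `inl i` is row `R_i`, `inr j` is column `C_j`;
edge `R_i – C_j` iff `M i j = 1`. -/
def Ge (M : Matrix (Fin n) (Fin n) (ZMod 2)) : SimpleGraph (Fin n ⊕ Fin n) :=
  SimpleGraph.fromRel (fun x y => ∃ i j, x = Sum.inl i ∧ y = Sum.inr j ∧ M i j = 1)

/-- `e(M)`: number of connected components of `G_e(M)`. -/
noncomputable def ecomp (M : Matrix (Fin n) (Fin n) (ZMod 2)) : ℕ :=
  Nat.card (Ge M).ConnectedComponent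

/-- The result of the CNOT operation `CNOT(i,j)`: add row `i` of `M` to row `j` over `F_2`. -/
def cnotStep (M : Matrix (Fin n) (Fin n) (ZMod 2)) (i j : Fin n) :
    Matrix (Fin n) (Fin n) (ZMod 2) :=
  M.updateRow j (M i + M j)

/-- A river of `M`: a permutation `σ` with `M k (σ k) = 1` for all `k`. -/
def IsRiver (M : Matrix (Fin n) (Fin n) (ZMod 2)) (σ : Equiv.Perm (Fin n)) : Prop :=
  ∀ k, M k (σ k) = 1

instance (M : Matrix (Fin n) (Fin n) (ZMod 2)) : DecidablePred (IsRiver M) := fun σ => by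
  unfold IsRiver; exact Fintype.decidableForallFintype

/-- A CNOT gate matrix: `I + E_{j,i}` for `i ≠ j` (left-multiplication adds row `i` to row `j`). -/
def IsCNOT (E : Matrix (Fin n) (Fin n) (ZMod 2)) : Prop :=
  ∃ i j : Fin n, i ≠ j ∧ E = 1 + Matrix.single j i 1

/-- `s(M)`: the minimum number of CNOT gate matrices whose product is `M`. -/
noncomputable def synthSize (M : Matrix (Fin n) (Fin n) (ZMod 2)) : ℕ :=
  sInf {k | ∃ L : List (Matrix (Fin n) (Fin n) (ZMod 2)),
    L.length = k ∧ (∀ E ∈ L, IsCNOT E) ∧ L.prod = M}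

/-- The permutation matrix `P_σ` with `(P_σ)_{i, σ(i)} = 1`. -/
def Pmat (σ : Equiv.Perm (Fin n)) : Matrix (Fin n) (Fin n) (ZMod 2) :=
  Matrix.of fun i j => if σ i = j then 1 else 0

/-!
The identity has `v(I) = n` components, and left multiplication by the CNOT matrix `I + E_{j,i}`
only replaces row `j` by the sum of rows `i` and `j`. Every edge of the new graph is therefore
a path in `G_v(A)` together with the single edge `{i, j}`, and adding one edge to a graph merges
at most two components, so each CNOT lowers `v` by at most one. Over `F_2` every invertible
matrix is a product of transvections with coefficient `1`, i.e. of CNOT matrices, so `s(M)` is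
attained, and a product of `k` CNOTs has `v ≥ n - k`.
-/

namespace SimpleGraph

variable {V : Type*} {G H : SimpleGraph V}

theorem Reachable.apply_eq_of_forall_adj {α : Type*} {f : V → α}
    (hf : ∀ a b, G.Adj a b → f a = f b) {u v : V} (h : G.Reachable u v) : f u = f v := by
  obtain ⟨p⟩ := h
  induction p with
  | nil => rfl
  | cons ha _ ih => exact (hf _ _ ha).trans ih

theorem reachable_le_of_adj_le (h : G.Adj ≤ H.Reachable) : G.Reachable ≤ H.Reachable :=
  fun _ _ huv => ConnectedComponent.exact <|
    huv.apply_eq_of_forall_adj (f := H.connectedComponentMk) fun a b hab =>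
      ConnectedComponent.sound (h a b hab)

theorem card_connectedComponent_le_of_reachable_le [Finite V] (h : G.Reachable ≤ H.Reachable) :
    Nat.card H.ConnectedComponent ≤ Nat.card G.ConnectedComponent :=
  Nat.card_le_card_of_surjective (Quot.map id h) fun c =>
    c.ind fun v => ⟨G.connectedComponentMk v, rfl⟩

theorem card_connectedComponent_le_sup_edge_add_one [Finite V] (G : SimpleGraph V) (s t : V) :
    Nat.card G.ConnectedComponent ≤ Nat.card (G ⊔ edge s t).ConnectedComponent + 1 := by
  classical
  set cs := G.connectedComponentMk s
  set ct := G.connectedComponentMk t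
  -- Merging the components of `s` and `t` gives a labelling that is constant along the new edge.
  let merge : G.ConnectedComponent → G.ConnectedComponent := fun c => if c = ct then cs else c
  have hmerge : ∀ a b, (G ⊔ edge s t).Reachable a b →
      merge (G.connectedComponentMk a) = merge (G.connectedComponentMk b) := by
    refine fun a b h => h.apply_eq_of_forall_adj
      (f := fun v => merge (G.connectedComponentMk v)) fun a b hab => ?_
    rcases hab with hG | he
    · rw [ConnectedComponent.sound hG.reachable]
    · obtain ⟨⟨rfl, rfl⟩ | ⟨rfl, rfl⟩, -⟩ := (edge_adj ..).1 he <;>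
        simp [merge, cs, ct]
  let F : G.ConnectedComponent → Option (G ⊔ edge s t).ConnectedComponent := fun c =>
    if c = ct then none else some (c.map (Hom.ofLE le_sup_left))
  have hF : Function.Injective F := by
    intro c c' hcc
    induction c using ConnectedComponent.ind with | h a => ?_
    induction c' using ConnectedComponent.ind with | h b => ?_
    by_cases ha : G.connectedComponentMk a = ct <;> by_cases hb : G.connectedComponentMk b = ct <;>
      simp only [F, ha, hb, if_true, if_false, reduceCtorEq, Option.some.injEq] at hcc
    · exact ha.trans hb.symm
    · have := hmerge a b (ConnectedComponent.exact (by simpa using hcc))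
      simpa [merge, ha, hb] using this
  simpa [Finite.card_option] using Nat.card_le_card_of_injective F hF

theorem card_connectedComponent_bot :
    Nat.card (⊥ : SimpleGraph V).ConnectedComponent = Nat.card V :=
  (Nat.card_congr <| Equiv.ofBijective _
    ⟨fun _ _ h => reachable_bot.mp (ConnectedComponent.exact h),
      fun c => c.ind fun v => ⟨v, rfl⟩⟩).symm

end SimpleGraph

open SimpleGraph

theorem ZMod.two_eq_one_or_eq_one_of_add_eq_one {x y : ZMod 2} (h : x + y = 1) :
    x = 1 ∨ y = 1 := by
  revert x y; decide

theorem Gv_adj_iff {M : Matrix (Fin n) (Fin n) (ZMod 2)} {a b : Fin n} :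
    (Gv M).Adj a b ↔ a ≠ b ∧ (M a b = 1 ∨ M b a = 1) := by
  simp [Gv]

theorem Gv_one : Gv (1 : Matrix (Fin n) (Fin n) (ZMod 2)) = ⊥ := by
  ext a b
  simp +contextual [Gv_adj_iff, one_apply_ne, Ne.symm]

theorem vcomp_one : vcomp (1 : Matrix (Fin n) (Fin n) (ZMod 2)) = n := by
  rw [vcomp, Gv_one, card_connectedComponent_bot, Nat.card_fin]

theorem one_add_single_mul_eq_cnotStep (A : Matrix (Fin n) (Fin n) (ZMod 2)) (i j : Fin n) :
    (1 + single j i 1) * A = cnotStep A i j := by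
  ext a b
  by_cases ha : a = j
  · subst ha; simp [cnotStep, add_mul, add_comm]
  · simp [cnotStep, add_mul, ha]

theorem reachable_of_cnotStep_apply_eq_one {A : Matrix (Fin n) (Fin n) (ZMod 2)} {i j a b : Fin n}
    (hij : i ≠ j) (hab : a ≠ b) (h : cnotStep A i j a b = 1) :
    (Gv A ⊔ edge i j).Reachable a b := by
  have hA : ∀ {a b}, a ≠ b → A a b = 1 → (Gv A ⊔ edge i j).Reachable a b :=
    fun hab h => (Gv_adj_iff.mpr ⟨hab, Or.inl h⟩).reachable.mono le_sup_left
  by_cases haj : a = j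
  · subst haj
    rw [cnotStep, updateRow_self, Pi.add_apply] at h
    rcases ZMod.two_eq_one_or_eq_one_of_add_eq_one h with hib | hjb
    · have hai : (Gv A ⊔ edge i a).Adj a i := Or.inr (by simp [edge_adj, hij.symm])
      obtain rfl | hbi := eq_or_ne b i
      · exact hai.reachable
      · exact hai.reachable.trans (hA hbi.symm hib)
    · exact hA hab hjb
  · rw [cnotStep, updateRow_ne haj] at h
    exact hA hab h

theorem Gv_cnotStep_adj_le_reachable {A : Matrix (Fin n) (Fin n) (ZMod 2)} {i j : Fin n}
    (hij : i ≠ j) : (Gv (cnotStep A i j)).Adj ≤ (Gv A ⊔ edge i j).Reachable := by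
  rintro a b hab
  rcases Gv_adj_iff.mp hab with ⟨hne, h | h⟩
  · exact reachable_of_cnotStep_apply_eq_one hij hne h
  · exact (reachable_of_cnotStep_apply_eq_one hij hne.symm h).symm

theorem vcomp_le_vcomp_cnotStep_add_one (A : Matrix (Fin n) (Fin n) (ZMod 2)) {i j : Fin n}
    (hij : i ≠ j) : vcomp A ≤ vcomp (cnotStep A i j) + 1 :=
  (card_connectedComponent_le_sup_edge_add_one _ i j).trans <| Nat.add_le_add_right
    (card_connectedComponent_le_of_reachable_le
      (reachable_le_of_adj_le (Gv_cnotStep_adj_le_reachable hij))) 1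

theorem IsCNOT.vcomp_le_vcomp_mul_add_one {E : Matrix (Fin n) (Fin n) (ZMod 2)} (hE : IsCNOT E)
    (A : Matrix (Fin n) (Fin n) (ZMod 2)) : vcomp A ≤ vcomp (E * A) + 1 := by
  obtain ⟨i, j, hij, rfl⟩ := hE
  rw [one_add_single_mul_eq_cnotStep]
  exact vcomp_le_vcomp_cnotStep_add_one A hij

theorem le_vcomp_prod_add_length {L : List (Matrix (Fin n) (Fin n) (ZMod 2))}
    (hL : ∀ E ∈ L, IsCNOT E) : n ≤ vcomp L.prod + L.length := by
  induction L with
  | nil => simp [vcomp_one]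
  | cons E L ih =>
    have hstep := (hL E List.mem_cons_self).vcomp_le_vcomp_mul_add_one L.prod
    have := ih fun E hE => hL E (List.mem_cons_of_mem _ hE)
    rw [List.prod_cons, List.length_cons]
    omega

theorem exists_list_isCNOT_prod_eq {M : Matrix (Fin n) (Fin n) (ZMod 2)} (hM : IsUnit M) :
    ∃ L : List (Matrix (Fin n) (Fin n) (ZMod 2)), (∀ E ∈ L, IsCNOT E) ∧ L.prod = M := by
  refine diagonal_transvection_induction_of_det_ne_zero
    (P := fun N => ∃ L : List _, (∀ E ∈ L, IsCNOT E) ∧ L.prod = N) M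
    ((isUnit_iff_isUnit_det M).mp hM).ne_zero ?_ ?_ ?_
  · intro D hD
    have hD1 : D = 1 := funext fun k => Fin.eq_one_of_ne_zero _ <|
      Finset.prod_ne_zero_iff.mp (det_diagonal (d := D) ▸ hD) k (Finset.mem_univ k)
    exact ⟨[], by simp, by simp [hD1]⟩
  · intro t
    by_cases hc : t.c = 0
    · exact ⟨[], by simp, by simp [TransvectionStruct.toMatrix, hc]⟩
    · refine ⟨[t.toMatrix], ?_, List.prod_singleton⟩
      simpa [TransvectionStruct.toMatrix, transvection, Fin.eq_one_of_ne_zero _ hc] using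
        ⟨t.j, t.i, t.hij.symm, rfl⟩
  · rintro A B - - ⟨L₁, h₁, rfl⟩ ⟨L₂, h₂, rfl⟩
    exact ⟨L₁ ++ L₂, by simpa using fun E hE => hE.elim (h₁ E) (h₂ E), List.prod_append⟩

theorem exists_length_eq_synthSize {M : Matrix (Fin n) (Fin n) (ZMod 2)} (hM : IsUnit M) :
    ∃ L : List (Matrix (Fin n) (Fin n) (ZMod 2)),
      L.length = synthSize M ∧ (∀ E ∈ L, IsCNOT E) ∧ L.prod = M := by
  obtain ⟨L, hL, hprod⟩ := exists_list_isCNOT_prod_eq hM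
  exact Nat.sInf_mem (s := {k | ∃ L : List (Matrix (Fin n) (Fin n) (ZMod 2)),
    L.length = k ∧ (∀ E ∈ L, IsCNOT E) ∧ L.prod = M}) ⟨L.length, L, rfl, hL, hprod⟩

/-- If `G_v(M)` is connected (`v(M) = 1`), then `s(M) ≥ n - 1`. -/
theorem stmt18 (n : ℕ) (M : Matrix (Fin n) (Fin n) (ZMod 2)) (hM : IsUnit M)
    (hconn : vcomp M = 1) :
    n - 1 ≤ synthSize M := by
  obtain ⟨L, hlen, hL, rfl⟩ := exists_length_eq_synthSize hM
  have := le_vcomp_prod_add_length hL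
  omega
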